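/- arXiv:2603.10848 — 2 statements merged into one kernel-verified Lean document; each statement's English description precedes it below -/
import Mathlib

section
/- The bias of the adaptive fused estimator μ̂* = ŵ·v̄ + (1−ŵ)·V equals −E[(1−ŵ)(v̄ − V)], and since the pointwise bound |(1−ŵ)(v̄ − V)| ≤ 1/√k holds, |E[μ̂*] − μ| ≤ 1/√k. -/
/-!
Since `ŵ v̄ + (1 - ŵ) V = v̄ - (1 - ŵ)(v̄ - V)`, the bias is `-E[(1 - ŵ)(v̄ - V)]`. Writing
`c = 1/k` and `d = v̄ - V`, one has `Δ̂² + c = max c d²`, so `(1 - ŵ) d = c d / max c d²`, and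
`√c |d| = √(c d²) ≤ max c d²` bounds this pointwise by `√c = 1/√k`.
-/

open MeasureTheory

/-- The weight `ŵ` as a function of the noise level `c = 1/k` and the deviation `d = v̄ - V`. -/
noncomputable def adaptiveWeight (c d : ℝ) : ℝ :=
  max 0 (d ^ 2 - c) / (max 0 (d ^ 2 - c) + c)

lemma measurable_adaptiveWeight (c : ℝ) : Measurable (adaptiveWeight c) := by
  unfold adaptiveWeight
  fun_prop

lemma one_sub_adaptiveWeight_mul (c d : ℝ) :
    (1 - adaptiveWeight c d) * d = c * d / max c (d ^ 2) := by
  have hnum : max 0 (d ^ 2 - c) = max c (d ^ 2) - c := by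
    rw [← max_sub_sub_right, sub_self]
  rw [adaptiveWeight, hnum, sub_add_cancel]
  rcases eq_or_ne (max c (d ^ 2)) 0 with hM | hM
  · have hd : d = 0 := pow_eq_zero_iff two_ne_zero |>.mp <|
      le_antisymm (hM ▸ le_max_right c (d ^ 2)) (sq_nonneg d)
    simp [hd]
  · field_simp
    ring

lemma abs_one_sub_adaptiveWeight_mul_le {c : ℝ} (hc : 0 ≤ c) (d : ℝ) :
    |(1 - adaptiveWeight c d) * d| ≤ √c := by
  have hM : 0 ≤ max c (d ^ 2) := le_max_of_le_right (sq_nonneg d)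
  have key : √c * |d| ≤ max c (d ^ 2) :=
    calc √c * |d| = √(c * d ^ 2) := by rw [Real.sqrt_mul hc, Real.sqrt_sq_eq_abs]
      _ ≤ √(max c (d ^ 2) ^ 2) :=
        Real.sqrt_le_sqrt (by nlinarith [le_max_left c (d ^ 2), le_max_right c (d ^ 2)])
      _ = max c (d ^ 2) := Real.sqrt_sq hM
  rw [one_sub_adaptiveWeight_mul, abs_div, abs_mul, abs_of_nonneg hc, abs_of_nonneg hM]
  calc c * |d| / max c (d ^ 2) = √c * (√c * |d| / max c (d ^ 2)) := by
        rw [← mul_div_assoc, ← mul_assoc, Real.mul_self_sqrt hc]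
    _ ≤ √c * 1 := by gcongr; exact div_le_one_of_le₀ key hM
    _ = √c := mul_one _

theorem adaptive_fused_estimator_bias_bound_general
    {Ω : Type*} [MeasurableSpace Ω] (P : Measure Ω) [IsProbabilityMeasure P]
    (k : ℕ) (V μtrue : ℝ)
    (v : Ω → ℝ) (hint : Integrable v P)
    (hmean : ∫ ω, v ω ∂P = μtrue) :
    |(∫ ω, (max 0 ((v ω - V) ^ 2 - 1 / (k : ℝ))
              / (max 0 ((v ω - V) ^ 2 - 1 / (k : ℝ)) + 1 / (k : ℝ)) * v ω
            + (1 - max 0 ((v ω - V) ^ 2 - 1 / (k : ℝ))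
                  / (max 0 ((v ω - V) ^ 2 - 1 / (k : ℝ)) + 1 / (k : ℝ))) * V) ∂P)
        - μtrue| ≤ 1 / Real.sqrt k := by
  set c : ℝ := 1 / (k : ℝ)
  set r : Ω → ℝ := fun ω => (1 - adaptiveWeight c (v ω - V)) * (v ω - V)
  have hr_le : ∀ ω, ‖r ω‖ ≤ √c := fun ω => abs_one_sub_adaptiveWeight_mul_le (by positivity) _
  have hr_meas : AEStronglyMeasurable r P := by
    have hd : AEMeasurable (fun ω => v ω - V) P := hint.aemeasurable.sub_const V
    exact (((measurable_adaptiveWeight c).comp_aemeasurable hd).const_sub 1 |>.mul hd)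
      |>.aestronglyMeasurable
  have hr_int : Integrable r P := Integrable.of_bound hr_meas _ (ae_of_all _ hr_le)
  have hestimator : (fun ω => adaptiveWeight c (v ω - V) * v ω
      + (1 - adaptiveWeight c (v ω - V)) * V) = fun ω => v ω - r ω := by
    funext ω
    ring
  calc _ = |∫ ω, r ω ∂P| := by
        change |∫ ω, adaptiveWeight c (v ω - V) * v ω
          + (1 - adaptiveWeight c (v ω - V)) * V ∂P - μtrue| = _
        rw [hestimator, integral_sub hint hr_int, hmean, sub_sub_cancel_left, abs_neg]
    _ ≤ √c := by simpa using norm_integral_le_of_norm_le_const (μ := P) (ae_of_all _ hr_le)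
    _ = 1 / √k := by simp only [c, one_div, Real.sqrt_inv]

theorem adaptive_fused_estimator_bias_bound
    {Ω : Type*} [MeasurableSpace Ω] (P : Measure Ω) [IsProbabilityMeasure P]
    (k : ℕ) (hk : 1 ≤ k) (V μtrue : ℝ)
    (v : Ω → ℝ) (hint : Integrable v P)
    (hmean : ∫ ω, v ω ∂P = μtrue) :
    |(∫ ω, (max 0 ((v ω - V) ^ 2 - 1 / (k : ℝ))
              / (max 0 ((v ω - V) ^ 2 - 1 / (k : ℝ)) + 1 / (k : ℝ)) * v ω
            + (1 - max 0 ((v ω - V) ^ 2 - 1 / (k : ℝ))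
                  / (max 0 ((v ω - V) ^ 2 - 1 / (k : ℝ)) + 1 / (k : ℝ))) * V) ∂P)
        - μtrue| ≤ 1 / Real.sqrt k :=
  adaptive_fused_estimator_bias_bound_general P k V μtrue v hint hmean
end

section
/- With the decomposition above and the additional bound E[‖s‖²(r−μ)] ≤ L/2 in absolute value, one obtains E[‖ĝ‖²] ≤ Var_oracle + Φ·MSE(b) + L·|Bias(b)|, where Var_oracle = E[‖s‖²(r−μ)²], Φ = E[‖s‖²], MSE(b) = E[(b−μ)²], and Bias(b) = E[b] − μ. -/
/-! Expanding `r - b = (r - μ) - (b - μ)` gives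
`‖ĝ‖² = ‖s‖²(r - μ)² - 2 (b - μ) ‖s‖²(r - μ) + (b - μ)² ‖s‖²`. Independence of `b` from `(s, r)`
factorises the expectations of the last two terms, so the cross term becomes
`-2 Bias(b) E[‖s‖²(r - μ)]`, which is at most `L |Bias(b)|` in absolute value. -/

open MeasureTheory ProbabilityTheory

lemma norm_sub_smul_sq_eq {E : Type*} [SeminormedAddCommGroup E] [NormedSpace ℝ E]
    (x : E) (r b μ : ℝ) :
    ‖(r - b) • x‖ ^ 2
      = ‖x‖ ^ 2 * (r - μ) ^ 2 - 2 * ((b - μ) * (‖x‖ ^ 2 * (r - μ))) + (b - μ) ^ 2 * ‖x‖ ^ 2 := by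
  rw [norm_smul, mul_pow, Real.norm_eq_abs, sq_abs]
  ring

lemma neg_two_mul_le_mul_abs_of_abs_le_half {B C L : ℝ} (hC : |C| ≤ L / 2) :
    -(2 * (B * C)) ≤ L * |B| := by
  calc -(2 * (B * C)) ≤ 2 * (|B| * |C|) := by
        rw [← abs_mul]; linarith [neg_abs_le (B * C)]
    _ ≤ L * |B| := by nlinarith [abs_nonneg B]

section Independent

variable {Ω E : Type*} [MeasurableSpace Ω] {P : Measure Ω} [IsProbabilityMeasure P]
  [NormedAddCommGroup E] [NormedSpace ℝ E] [MeasurableSpace E] [OpensMeasurableSpace E]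
  {s : Ω → E} {r b : Ω → ℝ} {μ : ℝ}

lemma integral_norm_sub_smul_sq_of_indepFun (hindep : IndepFun b (fun ω => (s ω, r ω)) P)
    (hsr : Integrable (fun ω => ‖s ω‖ ^ 2 * (r ω - μ) ^ 2) P)
    (hs : Integrable (fun ω => ‖s ω‖ ^ 2) P)
    (hb₂ : Integrable (fun ω => (b ω - μ) ^ 2) P)
    (hsr₁ : Integrable (fun ω => ‖s ω‖ ^ 2 * (r ω - μ)) P)
    (hb : Integrable b P) :
    ∫ ω, ‖(r ω - b ω) • s ω‖ ^ 2 ∂P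
      = (∫ ω, ‖s ω‖ ^ 2 * (r ω - μ) ^ 2 ∂P)
        - 2 * (((∫ ω, b ω ∂P) - μ) * ∫ ω, ‖s ω‖ ^ 2 * (r ω - μ) ∂P)
        + (∫ ω, (b ω - μ) ^ 2 ∂P) * ∫ ω, ‖s ω‖ ^ 2 ∂P := by
  have hcross_indep : IndepFun (fun ω => b ω - μ) (fun ω => ‖s ω‖ ^ 2 * (r ω - μ)) P :=
    hindep.comp (φ := fun x => x - μ) (ψ := fun p : E × ℝ => ‖p.1‖ ^ 2 * (p.2 - μ))
      (by fun_prop) (by fun_prop)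
  have hsq_indep : IndepFun (fun ω => (b ω - μ) ^ 2) (fun ω => ‖s ω‖ ^ 2) P :=
    hindep.comp (φ := fun x => (x - μ) ^ 2) (ψ := fun p : E × ℝ => ‖p.1‖ ^ 2)
      (by fun_prop) (by fun_prop)
  have hb₁ : Integrable (fun ω => b ω - μ) P := hb.sub (integrable_const μ)
  have hcross : Integrable (fun ω => (b ω - μ) * (‖s ω‖ ^ 2 * (r ω - μ))) P :=
    hcross_indep.integrable_mul hb₁ hsr₁
  have hsq : Integrable (fun ω => (b ω - μ) ^ 2 * ‖s ω‖ ^ 2) P :=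
    hsq_indep.integrable_mul hb₂ hs
  have hmean : ∫ ω, b ω - μ ∂P = (∫ ω, b ω ∂P) - μ := by
    rw [integral_sub hb (integrable_const μ), integral_const, probReal_univ, one_smul]
  simp_rw [norm_sub_smul_sq_eq (s _) (r _) (b _) μ]
  have hcross₂ : Integrable (fun ω => 2 * ((b ω - μ) * (‖s ω‖ ^ 2 * (r ω - μ)))) P :=
    hcross.const_mul 2
  have hdiff : Integrable
      (fun ω => ‖s ω‖ ^ 2 * (r ω - μ) ^ 2 - 2 * ((b ω - μ) * (‖s ω‖ ^ 2 * (r ω - μ)))) P :=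
    hsr.sub hcross₂
  rw [integral_add hdiff hsq, integral_sub hsr hcross₂, integral_const_mul,
    hcross_indep.integral_fun_mul_eq_mul_integral hb₁.1 hsr₁.1,
    hsq_indep.integral_fun_mul_eq_mul_integral hb₂.1 hs.1, hmean]

end Independent

theorem policy_gradient_second_moment_bound_general
    {Ω : Type*} [MeasurableSpace Ω] (P : Measure Ω) [IsProbabilityMeasure P]
    (d : ℕ) (s : Ω → EuclideanSpace ℝ (Fin d)) (r b : Ω → ℝ) (μtrue L : ℝ)
    (hindep : IndepFun b (fun ω => (s ω, r ω)) P)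
    (hint1 : Integrable (fun ω => ‖s ω‖ ^ 2 * (r ω - μtrue) ^ 2) P)
    (hint2 : Integrable (fun ω => ‖s ω‖ ^ 2) P)
    (hint3 : Integrable (fun ω => (b ω - μtrue) ^ 2) P)
    (hint4 : Integrable (fun ω => ‖s ω‖ ^ 2 * (r ω - μtrue)) P)
    (hint5 : Integrable b P)
    (hcross : |∫ ω, ‖s ω‖ ^ 2 * (r ω - μtrue) ∂P| ≤ L / 2) :
    ∫ ω, ‖(r ω - b ω) • s ω‖ ^ 2 ∂P
      ≤ (∫ ω, ‖s ω‖ ^ 2 * (r ω - μtrue) ^ 2 ∂P)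
        + (∫ ω, ‖s ω‖ ^ 2 ∂P) * (∫ ω, (b ω - μtrue) ^ 2 ∂P)
        + L * |(∫ ω, b ω ∂P) - μtrue| := by
  rw [integral_norm_sub_smul_sq_of_indepFun hindep hint1 hint2 hint3 hint4 hint5]
  linarith [neg_two_mul_le_mul_abs_of_abs_le_half (B := (∫ ω, b ω ∂P) - μtrue) hcross]

theorem policy_gradient_second_moment_bound
    {Ω : Type*} [MeasurableSpace Ω] (P : Measure Ω) [IsProbabilityMeasure P]
    (d : ℕ) (s : Ω → EuclideanSpace ℝ (Fin d)) (r b : Ω → ℝ) (μtrue L : ℝ)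
    (hL : 0 ≤ L)
    (hindep : IndepFun b (fun ω => (s ω, r ω)) P)
    (hint_g : Integrable (fun ω => ‖(r ω - b ω) • s ω‖ ^ 2) P)
    (hint1 : Integrable (fun ω => ‖s ω‖ ^ 2 * (r ω - μtrue) ^ 2) P)
    (hint2 : Integrable (fun ω => ‖s ω‖ ^ 2) P)
    (hint3 : Integrable (fun ω => (b ω - μtrue) ^ 2) P)
    (hint4 : Integrable (fun ω => ‖s ω‖ ^ 2 * (r ω - μtrue)) P)
    (hint5 : Integrable b P)
    (hcross : |∫ ω, ‖s ω‖ ^ 2 * (r ω - μtrue) ∂P| ≤ L / 2) :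
    ∫ ω, ‖(r ω - b ω) • s ω‖ ^ 2 ∂P
      ≤ (∫ ω, ‖s ω‖ ^ 2 * (r ω - μtrue) ^ 2 ∂P)
        + (∫ ω, ‖s ω‖ ^ 2 ∂P) * (∫ ω, (b ω - μtrue) ^ 2 ∂P)
        + L * |(∫ ω, b ω ∂P) - μtrue| :=
  policy_gradient_second_moment_bound_general P d s r b μtrue L hindep hint1 hint2 hint3 hint4 hint5
    hcross
end
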